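/- Let B ⊆ E be compact. There exists a constant C < ∞, depending only on φ and B, such that for all μ, μ' ∈ M_B and all λ, λ' ∈ ℝ: ‖L^B(μ,λ)‖ ≤ C·‖(μ,λ)‖², and ‖L^B(μ,λ) − L^B(μ',λ')‖ ≤ C·‖(μ,λ) − (μ',λ')‖·(‖(μ,λ)‖ + ‖(μ',λ')‖). -/

import Mathlib

open MeasureTheory Set ENNReal

noncomputable section

/-- `φ : E → [0,∞)` is *sublinear* on `E = (0,∞)`: `φ (l*x) ≤ l * φ x` for `x ∈ E`, `l ≥ 1`. -/
def Sublinear (φ : ℝ → ℝ) : Prop :=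
  ∀ x : ℝ, 0 < x → ∀ l : ℝ, 1 ≤ l → φ (l * x) ≤ l * φ x

/-- `K` is a coagulation kernel: nonnegative, symmetric and measurable on `E × E`. -/
def IsCoagKernel (K : ℝ → ℝ → ℝ) : Prop :=
  Measurable ((Set.Ioi (0:ℝ) ×ˢ Set.Ioi (0:ℝ)).restrict (Function.uncurry K)) ∧
  (∀ x y : ℝ, 0 < x → 0 < y → 0 ≤ K x y ∧ K x y = K y x)

/-- Integral `⟨f, m⟩ = ∫ f dm` of `f` against a finite signed measure `m`. -/
def sInt (m : SignedMeasure ℝ) (f : ℝ → ℝ) : ℝ :=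
  ∫ x, f x ∂m.toJordanDecomposition.posPart -
    ∫ x, f x ∂m.toJordanDecomposition.negPart

/-- Iterated double integral `∫∫ g(x,y) m(dx) m(dy)` against a signed measure. -/
def sInt2 (m : SignedMeasure ℝ) (g : ℝ → ℝ → ℝ) : ℝ :=
  sInt m fun x => sInt m fun y => g x y

/-- Total variation norm `‖m‖` of a finite signed measure. -/
def mnorm (m : SignedMeasure ℝ) : ℝ := (m.totalVariation Set.univ).toReal

/-- `m` is supported on `B`: it vanishes on measurable sets disjoint from `B`;
so `m ∈ M_B`. -/
def SupportedOn (m : SignedMeasure ℝ) (B : Set ℝ) : Prop :=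
  ∀ A : Set ℝ, MeasurableSet A → A ∩ B = ∅ → m A = 0

/-- The pairing `⟨(f,a), L^B(m,l)⟩` defining the operator `L^B` on `M_B × ℝ`:
`⟨(f,a), L^B(m,l)⟩ = ½∫∫ {f(x+y)1_{x+y∈B} + aφ(x+y)1_{x+y∉B} − f(x) − f(y)} K(x,y) m(dx)m(dy)
  + l ∫ {aφ(x) − f(x)} φ(x) m(dx)`. -/
def pairLB (K : ℝ → ℝ → ℝ) (φ : ℝ → ℝ) (B : Set ℝ)
    (m : SignedMeasure ℝ) (l : ℝ) (f : ℝ → ℝ) (a : ℝ) : ℝ :=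
  (1/2) * sInt2 m (fun x y =>
      (B.indicator f (x + y) + a * Bᶜ.indicator φ (x + y) - f x - f y) * K x y)
    + l * sInt m (fun x => (a * φ x - f x) * φ x)

/-- A solution of equation (B) on `[0,∞)`: a map `t ↦ (μ_t, λ_t) ∈ M_B × ℝ`, continuous in
the norm `‖(μ,λ)‖ = ‖μ‖ + |λ|`, with `(μ_t, λ_t) = (μ_0, λ_0) + ∫₀ᵗ L^B(μ_s, λ_s) ds`,
expressed via pairings against bounded measurable functions `f` and reals `a`. -/
structure IsSolB (K : ℝ → ℝ → ℝ) (φ : ℝ → ℝ) (B : Set ℝ)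
    (p : ℝ → SignedMeasure ℝ × ℝ) : Prop where
  cont : ∀ t : ℝ, 0 ≤ t → ∀ ε : ℝ, 0 < ε → ∃ δ : ℝ, 0 < δ ∧ ∀ s : ℝ, 0 ≤ s →
    |s - t| < δ → mnorm ((p s).1 - (p t).1) + |(p s).2 - (p t).2| < ε
  suppB : ∀ t : ℝ, 0 ≤ t → SupportedOn (p t).1 B
  eqn : ∀ t : ℝ, 0 ≤ t → ∀ f : ℝ → ℝ, Measurable f → (∃ C : ℝ, ∀ x, |f x| ≤ C) →
    ∀ a : ℝ,
      sInt (p t).1 f + a * (p t).2 =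
        sInt (p 0).1 f + a * (p 0).2 +
          ∫ s in (0:ℝ)..t, pairLB K φ B (p s).1 (p s).2 f a

/-!
On `B` and on `B × B` the two integrands of the pairing are bounded uniformly in `(f, a)` with
`|f| ≤ 1`, `|a| ≤ 1`, since `φ` is bounded on the compact set `B ∪ (B + B) ⊆ E` and
`0 ≤ K ≤ φ ⊗ φ`. Replacing them by bounded measurable functions `G`, `u` that agree with them there
(harmless for measures supported on `B`), the pairing becomes `½ ⟨G, m ⊗ m⟩ + l ⟨u, m⟩`, and both
estimates follow from `|⟨u, m⟩| ≤ sup |u| · ‖m‖` together with bilinearity: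
`⟨G, m ⊗ m⟩ - ⟨G, m' ⊗ m'⟩ = ⟨G, (m - m') ⊗ m⟩ + ⟨G, m' ⊗ (m - m')⟩`.
-/

open Function Pointwise

lemma measurable_indicator_of_measurable_domRestrict {α β : Type*} [MeasurableSpace α]
    [MeasurableSpace β] [Zero β] {s : Set α} {f : α → β} (hs : MeasurableSet s)
    (hf : Measurable (s.domRestrict f)) : Measurable (s.indicator f) := by
  refine measurable_of_restrict_of_restrict_compl hs ?_ ?_
  · convert hf using 1
    ext x
    exact indicator_of_mem x.2 f
  · convert (measurable_const : Measurable fun _ : (sᶜ : Set α) => (0 : β)) using 1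
    ext x
    exact indicator_of_notMem x.2 f

section SignedIntegral

variable {m m' : SignedMeasure ℝ} {u v : ℝ → ℝ} {c : ℝ}

lemma mnorm_eq_posPart_add_negPart (m : SignedMeasure ℝ) :
    mnorm m = m.toJordanDecomposition.posPart.real univ +
      m.toJordanDecomposition.negPart.real univ := by
  rw [mnorm, SignedMeasure.totalVariation, Measure.add_apply,
    ENNReal.toReal_add (measure_ne_top _ _) (measure_ne_top _ _)]
  rfl

lemma mnorm_nonneg (m : SignedMeasure ℝ) : 0 ≤ mnorm m := ENNReal.toReal_nonneg

lemma integrable_of_abs_le {μ : Measure ℝ} [IsFiniteMeasure μ] (hu : Measurable u)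
    (hc : ∀ x, |u x| ≤ c) : Integrable u μ :=
  .of_bound hu.aestronglyMeasurable c (.of_forall hc)

lemma abs_sInt_le (hc : ∀ x, |u x| ≤ c) : |sInt m u| ≤ c * mnorm m := by
  have hμ (μ : Measure ℝ) [IsFiniteMeasure μ] : |∫ x, u x ∂μ| ≤ c * μ.real univ :=
    norm_integral_le_of_norm_le_const (μ := μ) (f := u) (.of_forall hc)
  rw [sInt, mnorm_eq_posPart_add_negPart, mul_add]
  exact (abs_sub _ _).trans (add_le_add (hμ _) (hμ _))

lemma sInt_eq_integral_sub_integral {μ ν : Measure ℝ} [IsFiniteMeasure μ] [IsFiniteMeasure ν]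
    (hμν : μ.toSignedMeasure - ν.toSignedMeasure = m) (hu : Measurable u)
    (hc : ∀ x, |u x| ≤ c) : sInt m u = ∫ x, u x ∂μ - ∫ x, u x ∂ν := by
  set j := m.toJordanDecomposition
  have hj : j.posPart + ν = μ + j.negPart := by
    rw [← Measure.toSignedMeasure_eq_toSignedMeasure_iff, Measure.toSignedMeasure_add,
      Measure.toSignedMeasure_add, ← sub_eq_sub_iff_add_eq_add, hμν]
    exact m.toSignedMeasure_toJordanDecomposition
  have hint := congrArg (fun ρ => ∫ x, u x ∂ρ) hj
  simp only [integral_add_measure (integrable_of_abs_le hu hc) (integrable_of_abs_le hu hc)]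
    at hint
  rw [sInt]
  linarith

lemma sInt_sub_measure (hu : Measurable u) (hc : ∀ x, |u x| ≤ c) :
    sInt (m - m') u = sInt m u - sInt m' u := by
  set j := m.toJordanDecomposition
  set j' := m'.toJordanDecomposition
  have hμν : (j.posPart + j'.negPart).toSignedMeasure -
      (j.negPart + j'.posPart).toSignedMeasure = m - m' := by
    rw [Measure.toSignedMeasure_add, Measure.toSignedMeasure_add,
      ← m.toSignedMeasure_toJordanDecomposition, ← m'.toSignedMeasure_toJordanDecomposition]
    simp only [JordanDecomposition.toSignedMeasure]
    abel
  have hint (ρ : Measure ℝ) [IsFiniteMeasure ρ] : Integrable u ρ := integrable_of_abs_le hu hc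
  rw [sInt_eq_integral_sub_integral hμν hu hc, integral_add_measure (hint _) (hint _),
    integral_add_measure (hint _) (hint _), sInt, sInt]
  ring

lemma sInt_sub {c' : ℝ} (hu : Measurable u) (hcu : ∀ x, |u x| ≤ c) (hv : Measurable v)
    (hcv : ∀ x, |v x| ≤ c') : sInt m (fun x => u x - v x) = sInt m u - sInt m v := by
  simp only [sInt, integral_sub (integrable_of_abs_le hu hcu) (integrable_of_abs_le hv hcv)]
  ring

lemma abs_sInt_sub_sInt_le (hu : Measurable u) (hc : ∀ x, |u x| ≤ c) :
    |sInt m u - sInt m' u| ≤ c * mnorm (m - m') := by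
  rw [← sInt_sub_measure hu hc]
  exact abs_sInt_le hc

lemma SupportedOn.jordan_compl_eq_zero {B : Set ℝ} (hB : MeasurableSet B)
    (hm : SupportedOn m B) :
    m.toJordanDecomposition.posPart Bᶜ = 0 ∧ m.toJordanDecomposition.negPart Bᶜ = 0 := by
  obtain ⟨i, hi, hi₂, hi₃, hpos, hneg⟩ := m.toJordanDecomposition_spec
  have hnull {A : Set ℝ} (hA : MeasurableSet A) : m (A ∩ Bᶜ) = 0 :=
    hm _ (hA.inter hB.compl) (by rw [inter_assoc, compl_inter_self, inter_empty])
  rw [hpos, hneg, SignedMeasure.toMeasureOfZeroLE_apply _ hi₂ hi hB.compl,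
    SignedMeasure.toMeasureOfLEZero_apply _ hi₃ hi.compl hB.compl]
  simp [hnull hi, hnull hi.compl]

lemma SupportedOn.sInt_congr {B : Set ℝ} (hB : MeasurableSet B) (hm : SupportedOn m B)
    (h : EqOn u v B) : sInt m u = sInt m v := by
  have hae {ν : Measure ℝ} (hν : ν Bᶜ = 0) : u =ᵐ[ν] v :=
    ae_iff.2 (measure_mono_null (fun x hx hxB => hx (h hxB)) hν)
  obtain ⟨hpos, hneg⟩ := hm.jordan_compl_eq_zero hB
  rw [sInt, sInt, integral_congr_ae (hae hpos), integral_congr_ae (hae hneg)]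

lemma SupportedOn.sInt2_congr {B : Set ℝ} {G G' : ℝ → ℝ → ℝ} (hB : MeasurableSet B)
    (hm : SupportedOn m B) (h : ∀ x ∈ B, ∀ y ∈ B, G x y = G' x y) :
    sInt2 m G = sInt2 m G' :=
  hm.sInt_congr hB fun x hx => hm.sInt_congr hB (h x hx)

end SignedIntegral

section QuadraticForm

variable {m m' : SignedMeasure ℝ} {G : ℝ → ℝ → ℝ} {u : ℝ → ℝ} {c : ℝ}

lemma measurable_sInt_of_measurable_uncurry (hG : Measurable (uncurry G))
    (m : SignedMeasure ℝ) : Measurable fun x => sInt m (G x) :=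
  (hG.stronglyMeasurable.integral_prod_right').measurable.sub
    (hG.stronglyMeasurable.integral_prod_right').measurable

lemma abs_sInt2_le (hc : ∀ x y, |G x y| ≤ c) : |sInt2 m G| ≤ c * mnorm m ^ 2 := by
  calc |sInt2 m G| ≤ c * mnorm m * mnorm m := abs_sInt_le fun x => abs_sInt_le (hc x)
    _ = c * mnorm m ^ 2 := by ring

lemma abs_sInt2_sub_sInt2_le (hG : Measurable (uncurry G)) (hc : ∀ x y, |G x y| ≤ c) :
    |sInt2 m G - sInt2 m' G| ≤ c * mnorm (m - m') * (mnorm m + mnorm m') := by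
  have hGx (x : ℝ) : Measurable (G x) := hG.comp measurable_prodMk_left
  have hF := measurable_sInt_of_measurable_uncurry hG
  have hFc (μ : SignedMeasure ℝ) (x : ℝ) : |sInt μ (G x)| ≤ c * mnorm μ := abs_sInt_le (hc x)
  have hsplit : sInt2 m G - sInt2 m' G =
      (sInt m (fun x => sInt m (G x)) - sInt m' (fun x => sInt m (G x))) +
        sInt m' (fun x => sInt (m - m') (G x)) := by
    simp only [sInt2, sInt_sub_measure (hGx _) (hc _),
      sInt_sub (hF m) (hFc m) (hF m') (hFc m')]
    ring
  rw [hsplit]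
  calc _ ≤ c * mnorm m * mnorm (m - m') + c * mnorm (m - m') * mnorm m' :=
        (abs_add_le _ _).trans (add_le_add (abs_sInt_sub_sInt_le (hF m) (hFc m))
          (abs_sInt_le fun x => abs_sInt_le (hc x)))
    _ = c * mnorm (m - m') * (mnorm m + mnorm m') := by ring

def quadLinPairing (G : ℝ → ℝ → ℝ) (u : ℝ → ℝ) (m : SignedMeasure ℝ) (l : ℝ) : ℝ :=
  1 / 2 * sInt2 m G + l * sInt m u

lemma abs_quadLinPairing_le (hG : ∀ x y, |G x y| ≤ c) (hu : ∀ x, |u x| ≤ c)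
    (m : SignedMeasure ℝ) (l : ℝ) : |quadLinPairing G u m l| ≤ c * (mnorm m + |l|) ^ 2 := by
  have hc : 0 ≤ c := (abs_nonneg _).trans (hu 0)
  have hQ := abs_sInt2_le hG (m := m)
  have hL := abs_sInt_le hu (m := m)
  have hn := mnorm_nonneg m
  calc |quadLinPairing G u m l| ≤ 1 / 2 * |sInt2 m G| + |l| * |sInt m u| := by
        refine (abs_add_le _ _).trans_eq ?_
        rw [abs_mul, abs_mul, abs_of_pos one_half_pos]
    _ ≤ 1 / 2 * (c * mnorm m ^ 2) + |l| * (c * mnorm m) := by gcongr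
    _ ≤ c * (mnorm m + |l|) ^ 2 := by
        nlinarith [mul_nonneg hc (mul_nonneg hn (abs_nonneg l)), mul_nonneg hc (sq_nonneg |l|),
          mul_nonneg hc (sq_nonneg (mnorm m))]

lemma abs_quadLinPairing_sub_le (hGm : Measurable (uncurry G)) (hG : ∀ x y, |G x y| ≤ c)
    (hum : Measurable u) (hu : ∀ x, |u x| ≤ c) (m m' : SignedMeasure ℝ) (l l' : ℝ) :
    |quadLinPairing G u m l - quadLinPairing G u m' l'| ≤
      c * (mnorm (m - m') + |l - l'|) * ((mnorm m + |l|) + (mnorm m' + |l'|)) := by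
  have hc : 0 ≤ c := (abs_nonneg _).trans (hu 0)
  have hQ := abs_sInt2_sub_sInt2_le hGm hG (m := m) (m' := m')
  have hL := abs_sInt_sub_sInt_le hum hu (m := m) (m' := m')
  have hL' := abs_sInt_le hu (m := m')
  have hn := mnorm_nonneg m
  have hn' := mnorm_nonneg m'
  have hd := mnorm_nonneg (m - m')
  have hsplit : quadLinPairing G u m l - quadLinPairing G u m' l' =
      1 / 2 * (sInt2 m G - sInt2 m' G) +
        (l * (sInt m u - sInt m' u) + (l - l') * sInt m' u) := by
    rw [quadLinPairing, quadLinPairing]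
    ring
  rw [hsplit]
  calc _ ≤ |1 / 2 * (sInt2 m G - sInt2 m' G)| +
        (|l * (sInt m u - sInt m' u)| + |(l - l') * sInt m' u|) := by
        refine (abs_add_le _ _).trans ?_
        gcongr
        exact abs_add_le _ _
    _ = 1 / 2 * |sInt2 m G - sInt2 m' G| +
        (|l| * |sInt m u - sInt m' u| + |l - l'| * |sInt m' u|) := by
        rw [abs_mul, abs_mul, abs_mul, abs_of_pos one_half_pos]
    _ ≤ 1 / 2 * (c * mnorm (m - m') * (mnorm m + mnorm m')) +
        (|l| * (c * mnorm (m - m')) + |l - l'| * (c * mnorm m')) := by gcongr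
    _ ≤ c * (mnorm (m - m') + |l - l'|) * ((mnorm m + |l|) + (mnorm m' + |l'|)) := by
        have hcd := mul_nonneg hc hd
        have hcδ := mul_nonneg hc (abs_nonneg (l - l'))
        nlinarith [mul_nonneg hcd hn, mul_nonneg hcd hn', mul_nonneg hcd (abs_nonneg l'),
          mul_nonneg hcδ hn, mul_nonneg hcδ (abs_nonneg l), mul_nonneg hcδ (abs_nonneg l')]

end QuadraticForm

section Integrands

variable (K : ℝ → ℝ → ℝ) (φ : ℝ → ℝ) (B : Set ℝ) (f : ℝ → ℝ) (a : ℝ)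

/-- `φ` and `K` are only controlled on `E`; the indicators make this stand-in for the integrand
of `pairLB` measurable and bounded on all of `ℝ × ℝ`. -/
def pairLBQuad (x y : ℝ) : ℝ :=
  (B ×ˢ B).indicator (fun p : ℝ × ℝ =>
    (B.indicator f (p.1 + p.2) + a * (Ioi 0 \ B).indicator φ (p.1 + p.2) - f p.1 - f p.2) *
      (Ioi 0 ×ˢ Ioi 0).indicator (uncurry K) p) (x, y)

def pairLBLin (x : ℝ) : ℝ := (a * B.indicator φ x - f x) * B.indicator φ x

variable {K φ B f a}

lemma pairLBQuad_of_mem (hBE : B ⊆ Ioi 0) {x y : ℝ} (hx : x ∈ B) (hy : y ∈ B) :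
    pairLBQuad K φ B f a x y =
      (B.indicator f (x + y) + a * Bᶜ.indicator φ (x + y) - f x - f y) * K x y := by
  have hx0 : 0 < x := hBE hx
  have hy0 : 0 < y := hBE hy
  rw [pairLBQuad, indicator_of_mem (mk_mem_prod hx hy),
    indicator_of_mem (show (x, y) ∈ Ioi 0 ×ˢ Ioi 0 from mk_mem_prod hx0 hy0)]
  by_cases hxy : x + y ∈ B
  · simp [hxy]
  · simp [hxy, add_pos hx0 hy0]

lemma pairLBLin_of_mem {x : ℝ} (hx : x ∈ B) :
    pairLBLin φ B f a x = (a * φ x - f x) * φ x := by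
  simp [pairLBLin, indicator_of_mem hx]

lemma pairLB_eq_quadLinPairing (hB : MeasurableSet B) (hBE : B ⊆ Ioi 0)
    {m : SignedMeasure ℝ} (hm : SupportedOn m B) (l : ℝ) :
    pairLB K φ B m l f a = quadLinPairing (pairLBQuad K φ B f a) (pairLBLin φ B f a) m l := by
  rw [pairLB, quadLinPairing,
    hm.sInt2_congr hB fun x hx y hy => (pairLBQuad_of_mem hBE hx hy).symm,
    hm.sInt_congr hB fun x hx => (pairLBLin_of_mem hx).symm]

lemma measurable_uncurry_pairLBQuad (hφ : ContinuousOn φ (Ioi 0))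
    (hK : Measurable ((Ioi 0 ×ˢ Ioi 0).domRestrict (uncurry K))) (hB : MeasurableSet B)
    (hf : Measurable f) : Measurable (uncurry (pairLBQuad K φ B f a)) := by
  have hφ' : Measurable ((Ioi 0 \ B).indicator φ) :=
    measurable_indicator_of_measurable_domRestrict (measurableSet_Ioi.diff hB)
      (hφ.mono sdiff_subset).domRestrict.measurable
  have hK' : Measurable ((Ioi 0 ×ˢ Ioi 0).indicator (uncurry K)) :=
    measurable_indicator_of_measurable_domRestrict (measurableSet_Ioi.prod measurableSet_Ioi) hK
  have hsum : Measurable fun p : ℝ × ℝ => p.1 + p.2 := measurable_fst.add measurable_snd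
  exact (((((hf.indicator hB).comp hsum).add (measurable_const.mul (hφ'.comp hsum))).sub
    (hf.comp measurable_fst)).sub (hf.comp measurable_snd)).mul hK' |>.indicator (hB.prod hB)

lemma measurable_pairLBLin (hφ : ContinuousOn φ B) (hB : MeasurableSet B) (hf : Measurable f) :
    Measurable (pairLBLin φ B f a) := by
  have hφB := measurable_indicator_of_measurable_domRestrict hB hφ.domRestrict.measurable
  exact ((measurable_const.mul hφB).sub hf).mul hφB

variable {M : ℝ}

lemma abs_pairLBQuad_le (hK : ∀ x y, 0 < x → 0 < y → 0 ≤ K x y)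
    (hKφ : ∀ x y, 0 < x → 0 < y → K x y ≤ φ x * φ y) (hBE : B ⊆ Ioi 0) (hM : 0 ≤ M)
    (hφM : ∀ z ∈ B ∪ (B + B), |φ z| ≤ M) (hf : ∀ x, |f x| ≤ 1) (ha : |a| ≤ 1) (x y : ℝ) :
    |pairLBQuad K φ B f a x y| ≤ (3 + M) * M ^ 2 := by
  by_cases hxy : x ∈ B ∧ y ∈ B
  swap
  · rw [pairLBQuad, indicator_of_notMem (by simpa using hxy), abs_zero]
    positivity
  obtain ⟨hx, hy⟩ := hxy
  have hφx := hφM x (Or.inl hx)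
  have hφy := hφM y (Or.inl hy)
  have hKM : |K x y| ≤ M ^ 2 := by
    rw [abs_of_nonneg (hK x y (hBE hx) (hBE hy)), sq]
    calc K x y ≤ φ x * φ y := hKφ x y (hBE hx) (hBE hy)
      _ ≤ |φ x| * |φ y| := (le_abs_self _).trans (abs_mul _ _).le
      _ ≤ M * M := mul_le_mul hφx hφy (abs_nonneg _) hM
  have hfB : |B.indicator f (x + y)| ≤ 1 := by
    by_cases hxy : x + y ∈ B <;> simp [hxy, hf]
  have hφB : |a * Bᶜ.indicator φ (x + y)| ≤ M := by
    have hφxy : |Bᶜ.indicator φ (x + y)| ≤ M := by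
      by_cases hxy : x + y ∈ B
      · simpa [hxy] using hM
      · simpa [hxy] using hφM (x + y) (Or.inr (add_mem_add hx hy))
    rw [abs_mul]
    exact (mul_le_of_le_one_left (abs_nonneg _) ha).trans hφxy
  have hsum : |B.indicator f (x + y) + a * Bᶜ.indicator φ (x + y) - f x - f y| ≤ 3 + M := by
    have := abs_le.1 hfB
    have := abs_le.1 hφB
    have := abs_le.1 (hf x)
    have := abs_le.1 (hf y)
    rw [abs_le]
    constructor <;> linarith
  rw [pairLBQuad_of_mem hBE hx hy, abs_mul]
  exact mul_le_mul hsum hKM (abs_nonneg _) (by positivity)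

lemma abs_pairLBLin_le (hM : 0 ≤ M) (hφM : ∀ x ∈ B, |φ x| ≤ M) (hf : ∀ x, |f x| ≤ 1)
    (ha : |a| ≤ 1) (x : ℝ) : |pairLBLin φ B f a x| ≤ (M + 1) * M := by
  have hφB : |B.indicator φ x| ≤ M := by
    by_cases hx : x ∈ B
    · simpa [hx] using hφM x hx
    · simpa [hx] using hM
  have haφ : |a * B.indicator φ x| ≤ M := by
    rw [abs_mul]
    exact (mul_le_of_le_one_left (abs_nonneg _) ha).trans hφB
  rw [pairLBLin, abs_mul]
  exact mul_le_mul ((abs_sub _ _).trans (add_le_add haφ (hf x))) hφB (abs_nonneg _)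
    (by positivity)

end Integrands

lemma exists_abs_le_on_union_add {φ : ℝ → ℝ} {B : Set ℝ} (hφ : ContinuousOn φ (Ioi 0))
    (hB : IsCompact B) (hBE : B ⊆ Ioi 0) : ∃ M, 0 ≤ M ∧ ∀ z ∈ B ∪ (B + B), |φ z| ≤ M := by
  have hE : B ∪ (B + B) ⊆ Ioi 0 := union_subset hBE <| by
    rintro _ ⟨x, hx, y, hy, rfl⟩
    exact add_pos (mem_Ioi.1 (hBE hx)) (mem_Ioi.1 (hBE hy))
  obtain ⟨M, hM⟩ := (hB.union (hB.add hB)).exists_bound_of_continuousOn (hφ.mono hE)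
  exact ⟨max M 0, le_max_right _ _, fun z hz => (hM z hz).trans (le_max_left _ _)⟩

theorem LB_norm_estimates_general
    (φ : ℝ → ℝ) (hφcont : ContinuousOn φ (Set.Ioi 0))
    (K : ℝ → ℝ → ℝ) (hK : IsCoagKernel K)
    (hKφ : ∀ x y : ℝ, 0 < x → 0 < y → K x y ≤ φ x * φ y)
    (B : Set ℝ) (hBcpt : IsCompact B) (hBE : B ⊆ Set.Ioi 0) :
    ∃ C : ℝ, 0 ≤ C ∧
      (∀ m : SignedMeasure ℝ, SupportedOn m B → ∀ l : ℝ,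
        ∀ f : ℝ → ℝ, Measurable f → (∀ x, |f x| ≤ 1) → ∀ a : ℝ, |a| ≤ 1 →
          |pairLB K φ B m l f a| ≤ C * (mnorm m + |l|) ^ 2) ∧
      (∀ m m' : SignedMeasure ℝ, SupportedOn m B → SupportedOn m' B → ∀ l l' : ℝ,
        ∀ f : ℝ → ℝ, Measurable f → (∀ x, |f x| ≤ 1) → ∀ a : ℝ, |a| ≤ 1 →
          |pairLB K φ B m l f a - pairLB K φ B m' l' f a| ≤
            C * (mnorm (m - m') + |l - l'|) *
              ((mnorm m + |l|) + (mnorm m' + |l'|))) := by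
  have hB : MeasurableSet B := hBcpt.isClosed.measurableSet
  obtain ⟨M, hM, hφM⟩ := exists_abs_le_on_union_add hφcont hBcpt hBE
  set C := (3 + M) * M ^ 2 + (M + 1) * M
  have hG {f : ℝ → ℝ} (hf : ∀ x, |f x| ≤ 1) {a : ℝ} (ha : |a| ≤ 1) (x y : ℝ) :
      |pairLBQuad K φ B f a x y| ≤ C :=
    (abs_pairLBQuad_le (fun x y hx hy => (hK.2 x y hx hy).1) hKφ hBE hM hφM hf ha x y).trans
      (le_add_of_nonneg_right (by positivity))
  have hu {f : ℝ → ℝ} (hf : ∀ x, |f x| ≤ 1) {a : ℝ} (ha : |a| ≤ 1) (x : ℝ) :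
      |pairLBLin φ B f a x| ≤ C :=
    (abs_pairLBLin_le hM (fun x hx => hφM x (Or.inl hx)) hf ha x).trans
      (le_add_of_nonneg_left (by positivity))
  refine ⟨C, by positivity, ?_, ?_⟩
  · intro m hm l f _ hf a ha
    rw [pairLB_eq_quadLinPairing hB hBE hm]
    exact abs_quadLinPairing_le (hG hf ha) (hu hf ha) m l
  · intro m m' hm hm' l l' f hfm hf a ha
    rw [pairLB_eq_quadLinPairing hB hBE hm, pairLB_eq_quadLinPairing hB hBE hm']
    exact abs_quadLinPairing_sub_le (measurable_uncurry_pairLBQuad hφcont hK.1 hB hfm)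
      (hG hf ha) (measurable_pairLBLin (hφcont.mono hBE) hB hfm) (hu hf ha) m m' l l'

/-- for compact `B ⊆ E` there is a constant `C < ∞`, depending only on `φ`
and `B`, with `‖L^B(μ,λ)‖ ≤ C‖(μ,λ)‖²` and
`‖L^B(μ,λ) − L^B(μ',λ')‖ ≤ C‖(μ,λ) − (μ',λ')‖(‖(μ,λ)‖ + ‖(μ',λ')‖)` for all
`μ, μ' ∈ M_B`, `λ, λ' ∈ ℝ`.  The total variation norm of an element of `M_B × ℝ` is
expressed through its pairings with `(f,a)`, `f` bounded measurable with `|f| ≤ 1` and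
`|a| ≤ 1`. -/
theorem LB_norm_estimates
    (φ : ℝ → ℝ) (hφcont : ContinuousOn φ (Set.Ioi 0))
    (hφpos : ∀ x : ℝ, 0 < x → 0 < φ x) (hφsub : Sublinear φ)
    (K : ℝ → ℝ → ℝ) (hK : IsCoagKernel K)
    (hKφ : ∀ x y : ℝ, 0 < x → 0 < y → K x y ≤ φ x * φ y)
    (B : Set ℝ) (hBcpt : IsCompact B) (hBE : B ⊆ Set.Ioi 0) :
    ∃ C : ℝ, 0 ≤ C ∧
      (∀ m : SignedMeasure ℝ, SupportedOn m B → ∀ l : ℝ,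
        ∀ f : ℝ → ℝ, Measurable f → (∀ x, |f x| ≤ 1) → ∀ a : ℝ, |a| ≤ 1 →
          |pairLB K φ B m l f a| ≤ C * (mnorm m + |l|) ^ 2) ∧
      (∀ m m' : SignedMeasure ℝ, SupportedOn m B → SupportedOn m' B → ∀ l l' : ℝ,
        ∀ f : ℝ → ℝ, Measurable f → (∀ x, |f x| ≤ 1) → ∀ a : ℝ, |a| ≤ 1 →
          |pairLB K φ B m l f a - pairLB K φ B m' l' f a| ≤
            C * (mnorm (m - m') + |l - l'|) *
              ((mnorm m + |l|) + (mnorm m' + |l'|))) :=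
  LB_norm_estimates_general φ hφcont K hK hKφ B hBcpt hBE

end
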